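/- Under the setup of the previous statement, let $\Delta\tilde x^\star := -Q^{-1}\nabla f(x)$ denote the minimizer of the quadratic model $\tilde f_x(\cdot;Q)$. Then $f(x) - f(x_+) \geq \tfrac{\xi}{2K}\,(\Delta\tilde x^\star)^\top Q^\top Q_\mathcal{P}^{-1} Q\, (\Delta\tilde x^\star) \geq \tfrac{\xi}{2K}\,\lambda_{\min}\big(Q^\top Q_\mathcal{P}^{-1} Q\big)\,\|\Delta\tilde x^\star\|^2$. -/

import Mathlib

open Matrix

/-- Block-diagonal restriction of a matrix induced by a block assignment `π`. -/
def maskMat {n K : ℕ} (M : Matrix (Fin n) (Fin n) ℝ) (π : Fin n → Fin K) :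
    Matrix (Fin n) (Fin n) ℝ :=
  Matrix.of fun i j => if π i = π j then M i j else 0

/-- The smallest (real) eigenvalue of a matrix. -/
noncomputable def lambdaMin {n : ℕ} (M : Matrix (Fin n) (Fin n) ℝ) : ℝ :=
  sInf {μ : ℝ | Module.End.HasEigenvalue (Matrix.toLin' M) μ}

/-! With `P = (maskMat Q π)⁻¹` and `d = P g`, the step is `x₊ = x - d / K`. Splitting a vector
into its block components `u = ∑ₖ uₖ` and applying `(∑ₖ aₖ)² ≤ K ∑ₖ aₖ²` to the coordinates of
`√Q uₖ` gives `uᵀ Q u ≤ K · uᵀ Q_P u`. For `u = d` this reads `dᵀ Q d ≤ K · gᵀ P g`, so the model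
bound at `Δ = -d / K` yields `f x - f x₊ ≥ ξ / (2K) · gᵀ P g`. Since `Q Δ⋆ = -g`, this quantity is
`Δ⋆ᵀ Qᵀ P Q Δ⋆`, and the eigenvalue bound follows from `S - λ_min(S) • 1 ⪰ 0` for the symmetric
matrix `S = Qᵀ P Q`. -/

open scoped MatrixOrder in
theorem Matrix.PosSemidef.dotProduct_mulVec_eq_sqrt {m : Type*} [Fintype m] [DecidableEq m]
    {Q : Matrix m m ℝ} (hQ : Q.PosSemidef) (w : m → ℝ) :
    w ⬝ᵥ Q *ᵥ w = CFC.sqrt Q *ᵥ w ⬝ᵥ CFC.sqrt Q *ᵥ w := by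
  have hR : (CFC.sqrt Q)ᵀ = CFC.sqrt Q := by
    simpa using (CFC.sqrt_nonneg Q).posSemidef.isHermitian.eq
  conv_lhs => rw [← CFC.sqrt_mul_sqrt_self Q hQ.nonneg]
  rw [← mulVec_mulVec, dotProduct_mulVec, ← mulVec_transpose, hR]

theorem Matrix.PosSemidef.dotProduct_mulVec_sum_le {ι m : Type*} [Fintype ι] [Fintype m]
    {Q : Matrix m m ℝ} (hQ : Q.PosSemidef) (v : ι → m → ℝ) :
    (∑ k, v k) ⬝ᵥ Q *ᵥ ∑ k, v k ≤ Fintype.card ι * ∑ k, v k ⬝ᵥ Q *ᵥ v k := by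
  classical
  simp only [hQ.dotProduct_mulVec_eq_sqrt]
  simp only [mulVec_sum, dotProduct, Finset.sum_apply, ← sq]
  rw [Finset.sum_comm (γ := ι), Finset.mul_sum]
  exact Finset.sum_le_sum fun i _ => sq_sum_le_card_mul_sum_sq

def blockPart {ι κ : Type*} [DecidableEq κ] (π : ι → κ) (k : κ) (u : ι → ℝ) : ι → ℝ :=
  fun i => if π i = k then u i else 0

theorem sum_blockPart {ι κ : Type*} [Fintype κ] [DecidableEq κ] (π : ι → κ) (u : ι → ℝ) :
    ∑ k, blockPart π k u = u := by
  ext i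
  simp [blockPart, Finset.sum_apply]

theorem dotProduct_maskMat_mulVec {n K : ℕ} (M : Matrix (Fin n) (Fin n) ℝ) (π : Fin n → Fin K)
    (u : Fin n → ℝ) :
    u ⬝ᵥ maskMat M π *ᵥ u = ∑ k, blockPart π k u ⬝ᵥ M *ᵥ blockPart π k u := by
  simp only [dotProduct, mulVec, maskMat, blockPart, of_apply, Finset.mul_sum]
  conv_rhs => rw [Finset.sum_comm]
  refine Finset.sum_congr rfl fun i _ => ?_
  rw [Finset.sum_comm]
  refine Finset.sum_congr rfl fun j _ => ?_
  simp [ite_mul, mul_ite, Finset.sum_ite_eq', eq_comm]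

theorem Matrix.PosSemidef.dotProduct_mulVec_le_card_mul_maskMat {n K : ℕ}
    {Q : Matrix (Fin n) (Fin n) ℝ} (hQ : Q.PosSemidef) (π : Fin n → Fin K) (u : Fin n → ℝ) :
    u ⬝ᵥ Q *ᵥ u ≤ K * (u ⬝ᵥ maskMat Q π *ᵥ u) := by
  simpa only [sum_blockPart, Fintype.card_fin, ← dotProduct_maskMat_mulVec] using
    hQ.dotProduct_mulVec_sum_le fun k => blockPart π k u

theorem maskMat_transpose {n K : ℕ} (M : Matrix (Fin n) (Fin n) ℝ) (π : Fin n → Fin K) :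
    (maskMat M π)ᵀ = maskMat Mᵀ π := by
  ext i j
  simp [maskMat, eq_comm]

theorem Matrix.IsHermitian.maskMat {n K : ℕ} {M : Matrix (Fin n) (Fin n) ℝ}
    (hM : M.IsHermitian) (π : Fin n → Fin K) : (maskMat M π).IsHermitian := by
  rw [IsHermitian, conjTranspose_eq_transpose_of_trivial, maskMat_transpose,
    ← conjTranspose_eq_transpose_of_trivial, hM.eq]

theorem le_sub_of_quadratic_model {n K : ℕ} (f : (Fin n → ℝ) → ℝ)
    {Q : Matrix (Fin n) (Fin n) ℝ} (hQ : Q.PosSemidef) {ξ : ℝ} (hξ : 0 ≤ ξ) (x g : Fin n → ℝ)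
    (hmodel : ∀ Δ : Fin n → ℝ,
      f (x + Δ) ≤ ξ * (f x + g ⬝ᵥ Δ + 1 / 2 * (Δ ⬝ᵥ (Q *ᵥ Δ))) + (1 - ξ) * f x)
    (π : Fin n → Fin K) (hQP : IsUnit (maskMat Q π).det) :
    ξ / (2 * K) * (g ⬝ᵥ (maskMat Q π)⁻¹ *ᵥ g) ≤
      f x - f (x - (K : ℝ)⁻¹ • ((maskMat Q π)⁻¹ *ᵥ g)) := by
  obtain rfl | hK := K.eq_zero_or_pos
  · simp -- `(0 : ℝ)⁻¹ = 0`: both the step and the bound vanish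
  set d := (maskMat Q π)⁻¹ *ᵥ g
  have hd : d ⬝ᵥ Q *ᵥ d ≤ K * (g ⬝ᵥ d) := by
    simpa only [d, mulVec_mulVec, mul_nonsing_inv _ hQP, one_mulVec, dotProduct_comm _ g] using
      hQ.dotProduct_mulVec_le_card_mul_maskMat π d
  have hstep := hmodel (-((K : ℝ)⁻¹ • d))
  simp only [← sub_eq_add_neg, dotProduct_neg, mulVec_neg, neg_dotProduct,
    dotProduct_smul, mulVec_smul, smul_dotProduct, smul_eq_mul] at hstep
  have hKpos : (0 : ℝ) < K := by exact_mod_cast hK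
  have hcurv : ξ * ((K : ℝ)⁻¹ * ((K : ℝ)⁻¹ * (d ⬝ᵥ Q *ᵥ d))) ≤ ξ * ((K : ℝ)⁻¹ * (g ⬝ᵥ d)) := by
    gcongr
    exact (inv_mul_le_iff₀ hKpos).2 hd
  have hcoef : ξ / (2 * K) * (g ⬝ᵥ d) = ξ * ((K : ℝ)⁻¹ * (g ⬝ᵥ d)) / 2 := by ring
  linarith

theorem lambdaMin_eq_sInf_spectrum {n : ℕ} (M : Matrix (Fin n) (Fin n) ℝ) :
    lambdaMin M = sInf (spectrum ℝ M) := by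
  simp only [lambdaMin, Module.End.hasEigenvalue_iff_mem_spectrum, spectrum_toLin']
  rfl

open scoped MatrixOrder in
theorem lambdaMin_mul_dotProduct_le {n : ℕ} {S : Matrix (Fin n) (Fin n) ℝ}
    (hS : S.IsHermitian) (v : Fin n → ℝ) : lambdaMin S * (v ⬝ᵥ v) ≤ v ⬝ᵥ S *ᵥ v := by
  have hle : ∀ μ ∈ spectrum ℝ S, lambdaMin S ≤ μ := fun μ hμ => by
    rw [lambdaMin_eq_sInf_spectrum]
    exact csInf_le (Set.toFinite _).bddBelow hμ
  -- in the Loewner order, `c ≤ S` means that `S - c` is positive semidefinite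
  have hpsd : (S - algebraMap ℝ _ (lambdaMin S)).PosSemidef :=
    (algebraMap_le_iff_le_spectrum hS.isSelfAdjoint).2 hle
  simpa [Algebra.algebraMap_eq_smul_one, sub_mulVec, dotProduct_sub, smul_mulVec,
    dotProduct_smul] using hpsd.dotProduct_mulVec_nonneg v

theorem stmt7_general {n K : ℕ}
    (f : (Fin n → ℝ) → ℝ) (g : (Fin n → ℝ) → (Fin n → ℝ))
    (Q : Matrix (Fin n) (Fin n) ℝ) (hQ : Q.PosDef)
    (ξ : ℝ) (hξ0 : 0 < ξ)
    (x : Fin n → ℝ)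
    (hmodel : ∀ Δ : Fin n → ℝ,
      f (x + Δ) ≤ ξ * (f x + g x ⬝ᵥ Δ + 1 / 2 * (Δ ⬝ᵥ (Q *ᵥ Δ))) + (1 - ξ) * f x)
    (π : Fin n → Fin K) (hQP : IsUnit (maskMat Q π).det)
    (xplus : Fin n → ℝ)
    (hxplus : xplus = x - ((K : ℝ)⁻¹) • ((maskMat Q π)⁻¹ *ᵥ g x))
    -- the minimizer of the quadratic model
    (Δstar : Fin n → ℝ) (hΔstar : Δstar = -(Q⁻¹ *ᵥ g x)) :
    f x - f xplus ≥
        ξ / (2 * (K : ℝ)) * (Δstar ⬝ᵥ ((Qᵀ * (maskMat Q π)⁻¹ * Q) *ᵥ Δstar)) ∧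
    ξ / (2 * (K : ℝ)) * (Δstar ⬝ᵥ ((Qᵀ * (maskMat Q π)⁻¹ * Q) *ᵥ Δstar)) ≥
        ξ / (2 * (K : ℝ)) * lambdaMin (Qᵀ * (maskMat Q π)⁻¹ * Q) * (Δstar ⬝ᵥ Δstar) := by
  have hQΔ : Q *ᵥ Δstar = -g x := by
    rw [hΔstar, mulVec_neg, mulVec_mulVec,
      mul_nonsing_inv _ ((isUnit_iff_isUnit_det Q).mp hQ.isUnit), one_mulVec]
  have hquad : Δstar ⬝ᵥ (Qᵀ * (maskMat Q π)⁻¹ * Q) *ᵥ Δstar =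
      g x ⬝ᵥ (maskMat Q π)⁻¹ *ᵥ g x := by
    rw [← mulVec_mulVec, ← mulVec_mulVec, dotProduct_mulVec, vecMul_transpose, hQΔ,
      mulVec_neg, dotProduct_neg, neg_dotProduct, neg_neg]
  have hherm : (Qᵀ * (maskMat Q π)⁻¹ * Q).IsHermitian := by
    simpa only [conjTranspose_eq_transpose_of_trivial] using
      isHermitian_conjTranspose_mul_mul Q (hQ.isHermitian.maskMat π).inv
  refine ⟨?_, ?_⟩
  · rw [hquad, hxplus]
    exact le_sub_of_quadratic_model f hQ.posSemidef hξ0.le x (g x) hmodel π hQP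
  · rw [ge_iff_le, mul_assoc (ξ / (2 * (K : ℝ)))]
    exact mul_le_mul_of_nonneg_left (lambdaMin_mul_dotProduct_le hherm Δstar) (by positivity)

theorem stmt7 {n K : ℕ} (hK : 1 ≤ K)
    (f : (Fin n → ℝ) → ℝ) (g : (Fin n → ℝ) → (Fin n → ℝ))
    (hdiff : Differentiable ℝ f)
    (hgrad : ∀ x u, fderiv ℝ f x u = g x ⬝ᵥ u)
    (Q : Matrix (Fin n) (Fin n) ℝ) (hQ : Q.PosDef)
    (ξ : ℝ) (hξ0 : 0 < ξ) (hξ1 : ξ ≤ 1)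
    (x : Fin n → ℝ)
    (hmodel : ∀ Δ : Fin n → ℝ,
      f (x + Δ) ≤ ξ * (f x + g x ⬝ᵥ Δ + 1 / 2 * (Δ ⬝ᵥ (Q *ᵥ Δ))) + (1 - ξ) * f x)
    (π : Fin n → Fin K) (hQP : IsUnit (maskMat Q π).det)
    (xplus : Fin n → ℝ)
    (hxplus : xplus = x - ((K : ℝ)⁻¹) • ((maskMat Q π)⁻¹ *ᵥ g x))
    -- the minimizer of the quadratic model
    (Δstar : Fin n → ℝ) (hΔstar : Δstar = -(Q⁻¹ *ᵥ g x)) :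
    f x - f xplus ≥
        ξ / (2 * (K : ℝ)) * (Δstar ⬝ᵥ ((Qᵀ * (maskMat Q π)⁻¹ * Q) *ᵥ Δstar)) ∧
    ξ / (2 * (K : ℝ)) * (Δstar ⬝ᵥ ((Qᵀ * (maskMat Q π)⁻¹ * Q) *ᵥ Δstar)) ≥
        ξ / (2 * (K : ℝ)) * lambdaMin (Qᵀ * (maskMat Q π)⁻¹ * Q) * (Δstar ⬝ᵥ Δstar) :=
  stmt7_general f g Q hQ ξ hξ0 x hmodel π hQP xplus hxplus Δstar hΔstar
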